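/- Let S be a semigroup such that ab H ba for all a, b ∈ ℋ(S), and let a, a' ∈ S with a' ∈ V(a)[H]. Then a' ℋ(S) a ⊆ ℋ(S), i.e. for every group invertible h ∈ S, the element a'ha is group invertible. -/
import Mathlib


variable {S : Type*} [Semigroup S]

/-- Green's preorder `≤_L`: `a ∈ S¹ b`. -/
def leL (a b : S) : Prop := a = b ∨ ∃ x : S, a = x * b
/-- Green's preorder `≤_R`: `a ∈ b S¹`. -/
def leR (a b : S) : Prop := a = b ∨ ∃ x : S, a = b * x
/-- Green's preorder `≤_H`. -/
def leH (a b : S) : Prop := leL a b ∧ leR a b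
/-- Green's relation `L`. -/
def grL (a b : S) : Prop := leL a b ∧ leL b a
/-- Green's relation `R`. -/
def grR (a b : S) : Prop := leR a b ∧ leR b a
/-- Green's relation `H`. -/
def grH (a b : S) : Prop := leH a b ∧ leH b a
/-- `x` is the group inverse of `a`. -/
def IsGrpInv (a x : S) : Prop := a * x = x * a ∧ a * x * a = a ∧ x * a * x = x
/-- `a` is group invertible. -/
def GrpInvertible (a : S) : Prop := ∃ x : S, IsGrpInv a x
/-- `x ∈ V(a)[H]`: inverse of `a` modulo `H`. -/
def VH (a x : S) : Prop := grH (a * x * a) a ∧ grH (x * a * x) x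
/-- `x ∈ A(a)[H]`: associate of `a` modulo `H`. -/
def AH (a x : S) : Prop := grH (a * x * a) a
/-- `x ∈ V(a)`: reflexive inverse of `a`. -/
def refInv (a x : S) : Prop := a * x * a = a ∧ x * a * x = x
/-- The `H`-class of `a`. -/
def Hclass (a : S) : Set S := {b : S | grH b a}

/- ### Auxiliary lemmas -/

private lemma leL_trans' {a b c : S} (h1 : leL a b) (h2 : leL b c) : leL a c := by
  rcases h1 with h1 | ⟨x, hx⟩
  · subst h1; exact h2
  · rcases h2 with h2 | ⟨y, hy⟩
    · subst h2; exact Or.inr ⟨x, hx⟩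
    · exact Or.inr ⟨x * y, by rw [hx, hy, mul_assoc]⟩

private lemma leR_trans' {a b c : S} (h1 : leR a b) (h2 : leR b c) : leR a c := by
  rcases h1 with h1 | ⟨x, hx⟩
  · subst h1; exact h2
  · rcases h2 with h2 | ⟨y, hy⟩
    · subst h2; exact Or.inr ⟨x, hx⟩
    · exact Or.inr ⟨y * x, by rw [hx, hy, mul_assoc]⟩

private lemma leL_mul_right' {a b : S} (c : S) (h : leL a b) : leL (a * c) (b * c) := by
  rcases h with h | ⟨x, hx⟩
  · exact Or.inl (by rw [h])
  · exact Or.inr ⟨x, by rw [hx, mul_assoc]⟩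

private lemma leR_mul_left' {a b : S} (c : S) (h : leR a b) : leR (c * a) (c * b) := by
  rcases h with h | ⟨x, hx⟩
  · exact Or.inl (by rw [h])
  · exact Or.inr ⟨x, by rw [hx, ← mul_assoc]⟩

/-- If `c ≤_L c²` and `c ≤_R c²` then `c` is group invertible. -/
private lemma grpInvertible_of_sq {c : S} (hL : leL c (c * c)) (hR : leR c (c * c)) :
    GrpInvertible c := by
  have hy : ∃ y : S, c = y * (c * c) := by
    rcases hL with h | hv
    · exact ⟨c, by rw [← h]; exact h⟩
    · exact hv
  have hx : ∃ x : S, c = (c * c) * x := by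
    rcases hR with h | hv
    · exact ⟨c, by rw [← h]; exact h⟩
    · exact hv
  obtain ⟨y, hy⟩ := hy
  obtain ⟨x, hx⟩ := hx
  have hp : y * c = c * x := by
    conv_lhs => rw [hx]
    rw [← mul_assoc, ← hy]
  have h3 : c * (c * x) = c := by rw [← mul_assoc, ← hx]
  have h4 : (y * c) * c = c := by rw [mul_assoc, ← hy]
  have e1 : c * ((y * c) * x) = c * x := by
    rw [← mul_assoc, hp, h3]
  have e2 : ((y * c) * x) * c = y * c := by
    rw [mul_assoc y c x, mul_assoc y (c * x) c, ← hp, h4]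
  refine ⟨(y * c) * x, ?_, ?_, ?_⟩
  · rw [e1, e2, hp]
  · rw [e1, ← hp, h4]
  · rw [e2, mul_assoc y c ((y * c) * x), e1, ← mul_assoc]

private lemma grpInv_idem {j : S} (h : j * j = j) : GrpInvertible j :=
  ⟨j, rfl, by rw [h, h], by rw [h, h]⟩

/-- Closure: under `hcomm`, group invertibles are closed under multiplication. -/
private lemma grpInv_mul
    (hcomm : ∀ x y : S, GrpInvertible x → GrpInvertible y → grH (x * y) (y * x))
    {g k : S} (hg : GrpInvertible g) (hk : GrpInvertible k) : GrpInvertible (g * k) := by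
  obtain ⟨G, hG⟩ := hg
  obtain ⟨K, hK⟩ := hk
  have hpp : (g * G) * (g * G) = g * G := by rw [← mul_assoc, hG.2.1]
  have hqq : (k * K) * (k * K) = k * K := by rw [← mul_assoc, hK.2.1]
  have hp : GrpInvertible (g * G) := grpInv_idem hpp
  have hq : GrpInvertible (k * K) := grpInv_idem hqq
  -- L-side
  have l2 : leL ((g * (k * K)) * k) (((k * K) * g) * k) :=
    leL_mul_right' k (hcomm g (k * K) ⟨G, hG⟩ hq).1.1
  have e1 : (g * (k * K)) * k = g * k := by rw [mul_assoc, hK.2.1]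
  have e2 : ((k * K) * g) * k = K * ((k * g) * k) := by
    rw [hK.1]; simp only [mul_assoc]
  rw [e1, e2] at l2
  have l3 : leL (g * k) ((k * g) * k) := leL_trans' l2 (Or.inr ⟨K, rfl⟩)
  have m2 : leL ((k * (g * G)) * g) (((g * G) * k) * g) :=
    leL_mul_right' g (hcomm k (g * G) ⟨K, hK⟩ hp).1.1
  have e3 : (k * (g * G)) * g = k * g := by rw [mul_assoc, hG.2.1]
  have e4 : ((g * G) * k) * g = G * ((g * k) * g) := by
    rw [hG.1]; simp only [mul_assoc]
  rw [e3, e4] at m2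
  have m3 : leL (k * g) ((g * k) * g) := leL_trans' m2 (Or.inr ⟨G, rfl⟩)
  have l4 : leL ((k * g) * k) (((g * k) * g) * k) := leL_mul_right' k m3
  have e5 : ((g * k) * g) * k = (g * k) * (g * k) := mul_assoc (g * k) g k
  rw [e5] at l4
  have hLfin : leL (g * k) ((g * k) * (g * k)) := leL_trans' l3 l4
  -- R-side
  have r2 : leR (g * ((g * G) * k)) (g * (k * (g * G))) :=
    leR_mul_left' g (hcomm (g * G) k hp ⟨K, hK⟩).1.2
  have f1 : g * ((g * G) * k) = g * k := by
    rw [hG.1, ← mul_assoc, ← mul_assoc, hG.2.1]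
  have f2 : g * (k * (g * G)) = (g * (k * g)) * G := by simp only [mul_assoc]
  rw [f1, f2] at r2
  have r3 : leR (g * k) (g * (k * g)) := leR_trans' r2 (Or.inr ⟨G, rfl⟩)
  have s2 : leR (k * ((k * K) * g)) (k * (g * (k * K))) :=
    leR_mul_left' k (hcomm (k * K) g hq ⟨G, hG⟩).1.2
  have f3 : k * ((k * K) * g) = k * g := by
    rw [hK.1, ← mul_assoc, ← mul_assoc, hK.2.1]
  have f4 : k * (g * (k * K)) = (k * (g * k)) * K := by simp only [mul_assoc]
  rw [f3, f4] at s2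
  have s3 : leR (k * g) (k * (g * k)) := leR_trans' s2 (Or.inr ⟨K, rfl⟩)
  have r4 : leR (g * (k * g)) (g * (k * (g * k))) := leR_mul_left' g s3
  have f5 : g * (k * (g * k)) = (g * k) * (g * k) := by simp only [mul_assoc]
  rw [f5] at r4
  have hRfin : leR (g * k) ((g * k) * (g * k)) := leR_trans' r3 r4
  exact grpInvertible_of_sq hLfin hRfin

/-- Core sandwich lemma: if `c` is a reflexive inverse of `a`, then `c*h*a` is
group invertible for every group invertible `h`. -/
private lemma core_sandwich
    (hcomm : ∀ x y : S, GrpInvertible x → GrpInvertible y → grH (x * y) (y * x))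
    {c a h : S} (hh : GrpInvertible h)
    (h1 : a * c * a = a) (h2 : c * a * c = c) : GrpInvertible (c * h * a) := by
  have hJJ : (a * c) * (a * c) = a * c := by rw [← mul_assoc, h1]
  have hJinv : GrpInvertible (a * c) := grpInv_idem hJJ
  have hg1 : GrpInvertible ((a * c) * h) := grpInv_mul hcomm hJinv hh
  have hg : GrpInvertible (((a * c) * h) * (a * c)) := grpInv_mul hcomm hg1 hJinv
  obtain ⟨k, hk⟩ := hg
  set J := a * c with hJdef
  set g := (J * h) * J with hgdef
  have hJa : J * a = a := h1
  have hcJ : c * J = c := by rw [hJdef, ← mul_assoc]; exact h2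
  have hJg : J * g = g := by rw [hgdef, ← mul_assoc J (J * h) J, ← mul_assoc J J h, hJJ]
  have hgJ : g * J = g := by rw [hgdef, mul_assoc (J * h) J J, hJJ]
  have hπJ : (g * k) * J = g * k := by rw [hk.1, mul_assoc, hgJ]
  have hJπ : J * (g * k) = g * k := by rw [← mul_assoc, hJg]
  have hπk : (g * k) * k = k := by rw [hk.1]; exact hk.2.2
  have hkπ : k * (g * k) = k := by rw [← mul_assoc]; exact hk.2.2
  have hJk : J * k = k := by
    have h5 : J * ((g * k) * k) = k := by rw [← mul_assoc, hJπ, hπk]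
    rw [hπk] at h5; exact h5
  have hkJ : k * J = k := by
    have h5 : (k * (g * k)) * J = k := by rw [mul_assoc, hπJ, hkπ]
    rw [hkπ] at h5; exact h5
  have Rg : ∀ t : S, a * (c * (g * t)) = g * t := by
    intro t
    rw [← mul_assoc, ← hJdef, ← mul_assoc, hJg]
  have Rk : ∀ t : S, a * (c * (k * t)) = k * t := by
    intro t
    rw [← mul_assoc, ← hJdef, ← mul_assoc, hJk]
  have R3 : ∀ t : S, g * (k * (g * t)) = g * t := by
    intro t
    rw [← mul_assoc, ← mul_assoc, hk.2.1]
  have R4 : ∀ t : S, k * (g * (k * t)) = k * t := by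
    intro t
    rw [← mul_assoc, ← mul_assoc, hk.2.2]
  have Rc : ∀ t : S, k * (g * t) = g * (k * t) := by
    intro t
    rw [← mul_assoc, ← hk.1, mul_assoc]
  have hXeq : (c * g) * a = (c * h) * a := by
    rw [hgdef, ← mul_assoc c (J * h) J, mul_assoc (c * (J * h)) J a, hJa,
      ← mul_assoc c J h, hcJ]
  have hmain : GrpInvertible ((c * g) * a) := by
    refine ⟨(c * k) * a, ?_, ?_, ?_⟩
    · simp only [mul_assoc, Rg, Rk, Rc]
    · simp only [mul_assoc, Rg, Rk, R3]
    · simp only [mul_assoc, Rg, Rk, R4]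
  rw [← hXeq]
  exact hmain

theorem stmt19
    (hcomm : ∀ a b : S, GrpInvertible a → GrpInvertible b → grH (a * b) (b * a))
    (a a' : S) (ha' : VH a a') :
    ∀ h : S, GrpInvertible h → GrpInvertible (a' * h * a) := by
  intro h hh
  -- `e := a' * a` is group invertible
  have hLe : leL (a' * a) ((a' * a) * (a' * a)) := by
    have l2 := leL_mul_right' a ha'.2.2.1
    have e0 : (a' * a * a') * a = (a' * a) * (a' * a) := by simp only [mul_assoc]
    rwa [e0] at l2
  have hRe : leR (a' * a) ((a' * a) * (a' * a)) := by
    have r2 := leR_mul_left' a' ha'.1.2.2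
    have e0 : a' * (a * a' * a) = (a' * a) * (a' * a) := by simp only [mul_assoc]
    rwa [e0] at r2
  have he : GrpInvertible (a' * a) := grpInvertible_of_sq hLe hRe
  obtain ⟨E, hE⟩ := he
  -- witnesses for the `VH` relations
  have hz : ∃ z : S, a = z * (a * a' * a) := by
    rcases ha'.1.2.1 with h0 | hv
    · exact ⟨a * a', by rw [← h0]; exact h0⟩
    · exact hv
  have hv : ∃ v : S, a' = (a' * a * a') * v := by
    rcases ha'.2.2.2 with h0 | hvv
    · exact ⟨a * a', by rw [← h0, ← mul_assoc]; exact h0⟩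
    · exact hvv
  obtain ⟨z, hza⟩ := hz
  obtain ⟨v, hva⟩ := hv
  have h_ae : a = (z * a) * (a' * a) := by
    conv_lhs => rw [hza]
    simp only [mul_assoc]
  have hee : (a' * a) * ((a' * a) * E) = a' * a := by
    rw [hE.1, ← mul_assoc]; exact hE.2.1
  have haq : a * ((a' * a) * E) = a := by
    calc a * ((a' * a) * E) = ((z * a) * (a' * a)) * ((a' * a) * E) := by rw [← h_ae]
    _ = (z * a) * ((a' * a) * ((a' * a) * E)) := mul_assoc _ _ _
    _ = (z * a) * (a' * a) := by rw [hee]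
    _ = a := h_ae.symm
  have h_a'e : a' = (a' * a) * (a' * v) := by
    conv_lhs => rw [hva]
    simp only [mul_assoc]
  have hqa' : ((a' * a) * E) * a' = a' := by
    calc ((a' * a) * E) * a' = ((a' * a) * E) * ((a' * a) * (a' * v)) := by rw [← h_a'e]
    _ = (((a' * a) * E) * (a' * a)) * (a' * v) := (mul_assoc _ _ _).symm
    _ = (a' * a) * (a' * v) := by rw [hE.2.1]
    _ = a' := h_a'e.symm
  -- `c := E * a'` is a reflexive inverse of `a`
  have h1 : a * (E * a') * a = a := by
    calc a * (E * a') * a = a * (E * (a' * a)) := by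
          rw [mul_assoc a (E * a') a, mul_assoc E a' a]
    _ = a * ((a' * a) * E) := by rw [← hE.1]
    _ = a := haq
  have h2 : (E * a') * a * (E * a') = E * a' := by
    calc ((E * a') * a) * (E * a') = (E * (a' * a)) * (E * a') := by rw [mul_assoc E a' a]
    _ = E * ((a' * a) * (E * a')) := mul_assoc _ _ _
    _ = E * (((a' * a) * E) * a') := by rw [← mul_assoc (a' * a) E a']
    _ = E * a' := by rw [hqa']
  have hcore : GrpInvertible ((E * a') * h * a) := core_sandwich hcomm hh h1 h2
  have hfin : GrpInvertible ((a' * a) * ((E * a') * h * a)) :=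
    grpInv_mul hcomm ⟨E, hE⟩ hcore
  have hEq : (a' * a) * ((E * a') * h * a) = a' * h * a := by
    calc (a' * a) * (((E * a') * h) * a) = ((a' * a) * ((E * a') * h)) * a :=
          (mul_assoc _ _ _).symm
    _ = (((a' * a) * (E * a')) * h) * a := by rw [← mul_assoc (a' * a) (E * a') h]
    _ = ((((a' * a) * E) * a') * h) * a := by rw [← mul_assoc (a' * a) E a']
    _ = (a' * h) * a := by rw [hqa']
  rw [← hEq]
  exact hfin
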